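/- If n = 4m, b ≡ 3 (mod 4), and 8b ≡ 16 (mod n), then the permutation σ₃ defined case-wise on i mod 4 by: i≡0: A_i↦A_i, B_i↦A_{i+1}, C_i↦A_{i+2}; i≡1: A_i↦B_{i-1}, B_i↦A_{i-1+b}, C_i↦B_{i-1+b}; i≡2: A_i↦C_{i-2}, B_i↦C_{i-5+2b}, C_i↦C_{i-8+4b}; i≡3: A_i↦B_{i+1-b}, B_i↦C_{i+1-b}, C_i↦B_{i+5-2b}; is a graph automorphism of the propeller graph Pr_{4m}(b, b-4, 2b-3). -/

import Mathlib

/-- Vertices of a propeller graph: `A i`, `B i`, `C i` for `i : ZMod n`. -/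
inductive PVert (n : ℕ) : Type
  | A (i : ZMod n)
  | B (i : ZMod n)
  | C (i : ZMod n)
  deriving DecidableEq

open PVert

/-- One-directional edge relation of the propeller graph `Pr_n(b,c,d)`. -/
def propellerRel (n : ℕ) (b c d : ZMod n) (u v : PVert n) : Prop :=
  ∃ i : ZMod n,
    (u = A i ∧ v = A (i + 1)) ∨ (u = A i ∧ v = B i) ∨ (u = B i ∧ v = A (i + b)) ∨
    (u = B i ∧ v = C (i + c)) ∨ (u = C i ∧ v = B i) ∨ (u = C i ∧ v = C (i + d))

/-- The propeller graph `Pr_n(b,c,d)`: a tetravalent graph on `3n` vertices. -/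
def propeller (n : ℕ) (b c d : ZMod n) : SimpleGraph (PVert n) where
  Adj u v := u ≠ v ∧ (propellerRel n b c d u v ∨ propellerRel n b c d v u)
  symm := ⟨fun _ _ h => ⟨h.1.symm, h.2.symm⟩⟩
  loopless := ⟨fun _ h => h.1 rfl⟩

/-!
The map `σ₃` is an involution, so it is a graph automorphism as soon as it sends edges to
edges. Both facts are checked edge family by edge family and residue by residue: they only
involve the residue of the index modulo `4` (well defined since `4 ∣ 4m`) and linear identities
in `ZMod (4m)`. The hypothesis `8b = 16` is needed exactly where `C_i ↦ C_{i-8+4b}` is applied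
twice, and for the images of the edges `B_i C_{i+b-4}` and `C_i C_{i+2b-3}` with `i ≡ 3`.
-/

open PVert SimpleGraph Function

namespace SimpleGraph

variable {V : Type*}

theorem fromRel_adj_map_of_injective {r : V → V → Prop} {f : V → V} (hf : Injective f)
    (h : ∀ u v, r u v → r (f u) (f v) ∨ r (f v) (f u)) {u v : V} (huv : (fromRel r).Adj u v) :
    (fromRel r).Adj (f u) (f v) := by
  obtain ⟨hne, huv | hvu⟩ := huv
  · exact ⟨hf.ne hne, h u v huv⟩
  · exact ⟨hf.ne hne, (h v u hvu).symm⟩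

def Iso.ofInvolutive {G : SimpleGraph V} {f : V → V} (hf : Involutive f)
    (h : ∀ u v, G.Adj u v → G.Adj (f u) (f v)) : G ≃g G where
  toEquiv := hf.toPerm f
  map_rel_iff' {u v} := ⟨fun huv => hf u ▸ hf v ▸ h _ _ huv, h u v⟩

end SimpleGraph

section PropellerRel

variable {n : ℕ} {b c d : ZMod n} {i j : ZMod n}

theorem propellerRel_A_A (h : j = i + 1) : propellerRel n b c d (A i) (A j) :=
  ⟨i, .inl ⟨rfl, h ▸ rfl⟩⟩

theorem propellerRel_A_B (h : j = i) : propellerRel n b c d (A i) (B j) :=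
  ⟨i, .inr <| .inl ⟨rfl, h ▸ rfl⟩⟩

theorem propellerRel_B_A (h : j = i + b) : propellerRel n b c d (B i) (A j) :=
  ⟨i, .inr <| .inr <| .inl ⟨rfl, h ▸ rfl⟩⟩

theorem propellerRel_B_C (h : j = i + c) : propellerRel n b c d (B i) (C j) :=
  ⟨i, .inr <| .inr <| .inr <| .inl ⟨rfl, h ▸ rfl⟩⟩

theorem propellerRel_C_B (h : j = i) : propellerRel n b c d (C i) (B j) :=
  ⟨i, .inr <| .inr <| .inr <| .inr <| .inl ⟨rfl, h ▸ rfl⟩⟩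

theorem propellerRel_C_C (h : j = i + d) : propellerRel n b c d (C i) (C j) :=
  ⟨i, .inr <| .inr <| .inr <| .inr <| .inr ⟨rfl, h ▸ rfl⟩⟩

end PropellerRel

theorem ZMod.four_cases (r : ZMod 4) : r = 0 ∨ r = 1 ∨ r = 2 ∨ r = 3 := by
  revert r; decide

def mod4 {m : ℕ} : ZMod (4 * m) →+* ZMod 4 := ZMod.castHom (dvd_mul_right 4 m) (ZMod 4)

theorem mod4_eq_of_val_mod {m : ℕ} [NeZero (4 * m)] {i : ZMod (4 * m)} {q : ℕ}
    (h : i.val % 4 = q) : mod4 i = q := by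
  rw [mod4, ZMod.castHom_apply, ← ZMod.natCast_val, ← ZMod.natCast_mod, h]

/-- Column `k` of each row is the image of the vertex when `i ≡ k (mod 4)`. -/
def sigma3 {m : ℕ} (b : ZMod (4 * m)) : PVert (4 * m) → PVert (4 * m)
  | A i => ![A i, B (i - 1), C (i - 2), B (i + 1 - b)] (mod4 i)
  | B i => ![A (i + 1), A (i - 1 + b), C (i - 5 + 2 * b), C (i + 1 - b)] (mod4 i)
  | C i => ![A (i + 2), B (i - 1 + b), C (i - 8 + 4 * b), B (i + 5 - 2 * b)] (mod4 i)

namespace sigma3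

variable {m : ℕ} {b i : ZMod (4 * m)}

theorem A_of_zero (h : mod4 i = 0) : sigma3 b (A i) = A i := by rw [sigma3, h]; rfl
theorem A_of_one (h : mod4 i = 1) : sigma3 b (A i) = B (i - 1) := by rw [sigma3, h]; rfl
theorem A_of_two (h : mod4 i = 2) : sigma3 b (A i) = C (i - 2) := by rw [sigma3, h]; rfl
theorem A_of_three (h : mod4 i = 3) : sigma3 b (A i) = B (i + 1 - b) := by rw [sigma3, h]; rfl
theorem B_of_zero (h : mod4 i = 0) : sigma3 b (B i) = A (i + 1) := by rw [sigma3, h]; rfl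
theorem B_of_one (h : mod4 i = 1) : sigma3 b (B i) = A (i - 1 + b) := by rw [sigma3, h]; rfl
theorem B_of_two (h : mod4 i = 2) : sigma3 b (B i) = C (i - 5 + 2 * b) := by rw [sigma3, h]; rfl
theorem B_of_three (h : mod4 i = 3) : sigma3 b (B i) = C (i + 1 - b) := by rw [sigma3, h]; rfl
theorem C_of_zero (h : mod4 i = 0) : sigma3 b (C i) = A (i + 2) := by rw [sigma3, h]; rfl
theorem C_of_one (h : mod4 i = 1) : sigma3 b (C i) = B (i - 1 + b) := by rw [sigma3, h]; rfl
theorem C_of_two (h : mod4 i = 2) : sigma3 b (C i) = C (i - 8 + 4 * b) := by rw [sigma3, h]; rfl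
theorem C_of_three (h : mod4 i = 3) : sigma3 b (C i) = B (i + 5 - 2 * b) := by rw [sigma3, h]; rfl

end sigma3

namespace sigma3

variable {m : ℕ} {b : ZMod (4 * m)}

theorem involutive (hb : mod4 b = 3) (h8 : 8 * b = 16) : Involutive (sigma3 b) := by
  rintro (i | i | i) <;> rcases ZMod.four_cases (mod4 i) with hq | hq | hq | hq
  · rw [A_of_zero hq, A_of_zero hq]
  · rw [A_of_one hq, B_of_zero (by simp +decide [hq])]
    exact congrArg A (by ring)
  · rw [A_of_two hq, C_of_zero (by simp +decide [hq, map_ofNat])]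
    exact congrArg A (by ring)
  · rw [A_of_three hq, B_of_one (by simp +decide [hq, hb])]
    exact congrArg A (by ring)
  · rw [B_of_zero hq, A_of_one (by simp +decide [hq])]
    exact congrArg B (by ring)
  · rw [B_of_one hq, A_of_three (by simp +decide [hq, hb])]
    exact congrArg B (by ring)
  · rw [B_of_two hq, C_of_three (by simp +decide [hq, hb, map_ofNat])]
    exact congrArg B (by ring)
  · rw [B_of_three hq, C_of_one (by simp +decide [hq, hb])]
    exact congrArg B (by ring)
  · rw [C_of_zero hq, A_of_two (by simp +decide [hq, map_ofNat])]
    exact congrArg C (by ring)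
  · rw [C_of_one hq, B_of_three (by simp +decide [hq, hb])]
    exact congrArg C (by ring)
  · rw [C_of_two hq, C_of_two (by simp +decide [hq, hb, map_ofNat])]
    exact congrArg C (by linear_combination h8)
  · rw [C_of_three hq, B_of_two (by simp +decide [hq, hb, map_ofNat])]
    exact congrArg C (by ring)

local notation "R" => propellerRel (4 * m) b (b - 4) (2 * b - 3)

theorem rel_A_A (i : ZMod (4 * m)) :
    R (sigma3 b (A i)) (sigma3 b (A (i + 1))) ∨ R (sigma3 b (A (i + 1))) (sigma3 b (A i)) := by
  rcases ZMod.four_cases (mod4 i) with hq | hq | hq | hq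
  · rw [A_of_zero hq, A_of_one (by simp +decide [hq])]
    exact .inl (propellerRel_A_B (by ring))
  · rw [A_of_one hq, A_of_two (by simp +decide [hq])]
    exact .inr (propellerRel_C_B (by ring))
  · rw [A_of_two hq, A_of_three (by simp +decide [hq])]
    exact .inr (propellerRel_B_C (by ring))
  · rw [A_of_three hq, A_of_zero (by simp +decide [hq])]
    exact .inl (propellerRel_B_A (by ring))

theorem rel_A_B (i : ZMod (4 * m)) :
    R (sigma3 b (A i)) (sigma3 b (B i)) ∨ R (sigma3 b (B i)) (sigma3 b (A i)) := by
  rcases ZMod.four_cases (mod4 i) with hq | hq | hq | hq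
  · rw [A_of_zero hq, B_of_zero hq]
    exact .inl (propellerRel_A_A rfl)
  · rw [A_of_one hq, B_of_one hq]
    exact .inl (propellerRel_B_A (by ring))
  · rw [A_of_two hq, B_of_two hq]
    exact .inl (propellerRel_C_C (by ring))
  · rw [A_of_three hq, B_of_three hq]
    exact .inr (propellerRel_C_B rfl)

theorem rel_B_A (hb : mod4 b = 3) (i : ZMod (4 * m)) :
    R (sigma3 b (B i)) (sigma3 b (A (i + b))) ∨ R (sigma3 b (A (i + b))) (sigma3 b (B i)) := by
  rcases ZMod.four_cases (mod4 i) with hq | hq | hq | hq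
  · rw [B_of_zero hq, A_of_three (by simp +decide [hq, hb])]
    exact .inl (propellerRel_A_B (by ring))
  · rw [B_of_one hq, A_of_zero (by simp +decide [hq, hb])]
    exact .inl (propellerRel_A_A (by ring))
  · rw [B_of_two hq, A_of_one (by simp +decide [hq, hb])]
    exact .inr (propellerRel_B_C (by ring))
  · rw [B_of_three hq, A_of_two (by simp +decide [hq, hb])]
    exact .inl (propellerRel_C_C (by ring))

theorem rel_B_C (hb : mod4 b = 3) (h8 : 8 * b = 16) (i : ZMod (4 * m)) :
    R (sigma3 b (B i)) (sigma3 b (C (i + (b - 4)))) ∨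
      R (sigma3 b (C (i + (b - 4)))) (sigma3 b (B i)) := by
  rcases ZMod.four_cases (mod4 i) with hq | hq | hq | hq
  · rw [B_of_zero hq, C_of_three (by simp +decide [hq, hb, map_ofNat])]
    exact .inr (propellerRel_B_A (by ring))
  · rw [B_of_one hq, C_of_zero (by simp +decide [hq, hb, map_ofNat])]
    exact .inr (propellerRel_A_A (by ring))
  · rw [B_of_two hq, C_of_one (by simp +decide [hq, hb, map_ofNat])]
    exact .inl (propellerRel_C_B (by ring))
  · rw [B_of_three hq, C_of_two (by simp +decide [hq, hb, map_ofNat])]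
    exact .inr (propellerRel_C_C (by linear_combination -h8))

theorem rel_C_B (i : ZMod (4 * m)) :
    R (sigma3 b (C i)) (sigma3 b (B i)) ∨ R (sigma3 b (B i)) (sigma3 b (C i)) := by
  rcases ZMod.four_cases (mod4 i) with hq | hq | hq | hq
  · rw [C_of_zero hq, B_of_zero hq]
    exact .inr (propellerRel_A_A (by ring))
  · rw [C_of_one hq, B_of_one hq]
    exact .inr (propellerRel_A_B rfl)
  · rw [C_of_two hq, B_of_two hq]
    exact .inr (propellerRel_C_C (by ring))
  · rw [C_of_three hq, B_of_three hq]
    exact .inl (propellerRel_B_C (by ring))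

theorem rel_C_C (hb : mod4 b = 3) (h8 : 8 * b = 16) (i : ZMod (4 * m)) :
    R (sigma3 b (C i)) (sigma3 b (C (i + (2 * b - 3)))) ∨
      R (sigma3 b (C (i + (2 * b - 3)))) (sigma3 b (C i)) := by
  rcases ZMod.four_cases (mod4 i) with hq | hq | hq | hq
  · rw [C_of_zero hq, C_of_three (by simp +decide [hq, hb, map_ofNat])]
    exact .inl (propellerRel_A_B (by ring))
  · rw [C_of_one hq, C_of_zero (by simp +decide [hq, hb, map_ofNat])]
    exact .inl (propellerRel_B_A (by ring))
  · rw [C_of_two hq, C_of_one (by simp +decide [hq, hb, map_ofNat])]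
    exact .inr (propellerRel_B_C (by ring))
  · rw [C_of_three hq, C_of_two (by simp +decide [hq, hb, map_ofNat])]
    exact .inr (propellerRel_C_B (by linear_combination -h8))

theorem map_rel (hb : mod4 b = 3) (h8 : 8 * b = 16) {u v : PVert (4 * m)} (h : R u v) :
    R (sigma3 b u) (sigma3 b v) ∨ R (sigma3 b v) (sigma3 b u) := by
  obtain ⟨i, ⟨rfl, rfl⟩ | ⟨rfl, rfl⟩ | ⟨rfl, rfl⟩ | ⟨rfl, rfl⟩ | ⟨rfl, rfl⟩ | ⟨rfl, rfl⟩⟩ := h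
  exacts [rel_A_A i, rel_A_B i, rel_B_A hb i, rel_B_C hb h8 i, rel_C_B i, rel_C_C hb h8 i]

theorem map_adj (hb : mod4 b = 3) (h8 : 8 * b = 16) (u v : PVert (4 * m))
    (h : (propeller (4 * m) b (b - 4) (2 * b - 3)).Adj u v) :
    (propeller (4 * m) b (b - 4) (2 * b - 3)).Adj (sigma3 b u) (sigma3 b v) :=
  fromRel_adj_map_of_injective (involutive hb h8).injective (fun _ _ => map_rel hb h8) h

end sigma3

theorem propeller_family3_automorphism_general
    (m b : ℕ) (hm : 1 ≤ m) (hb4 : b % 4 = 3)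
    (h8b : 8 * (b : ZMod (4 * m)) = 16) :
    ∃ φ : propeller (4 * m) b ((b : ZMod (4 * m)) - 4) (2 * (b : ZMod (4 * m)) - 3) ≃g
          propeller (4 * m) b ((b : ZMod (4 * m)) - 4) (2 * (b : ZMod (4 * m)) - 3),
      ∀ i : ZMod (4 * m),
        (i.val % 4 = 0 →
          φ (A i) = A i ∧ φ (B i) = A (i + 1) ∧ φ (C i) = A (i + 2)) ∧
        (i.val % 4 = 1 →
          φ (A i) = B (i - 1) ∧ φ (B i) = A (i - 1 + (b : ZMod (4 * m))) ∧
          φ (C i) = B (i - 1 + (b : ZMod (4 * m)))) ∧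
        (i.val % 4 = 2 →
          φ (A i) = C (i - 2) ∧ φ (B i) = C (i - 5 + 2 * (b : ZMod (4 * m))) ∧
          φ (C i) = C (i - 8 + 4 * (b : ZMod (4 * m)))) ∧
        (i.val % 4 = 3 →
          φ (A i) = B (i + 1 - (b : ZMod (4 * m))) ∧
          φ (B i) = C (i + 1 - (b : ZMod (4 * m))) ∧
          φ (C i) = B (i + 5 - 2 * (b : ZMod (4 * m)))) := by
  have : NeZero (4 * m) := ⟨by omega⟩
  have hb : mod4 (b : ZMod (4 * m)) = 3 := by
    rw [map_natCast, ← ZMod.natCast_mod, hb4]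
    rfl
  refine ⟨Iso.ofInvolutive (sigma3.involutive hb h8b) (sigma3.map_adj hb h8b), fun i => ?_⟩
  refine ⟨fun h => ?_, fun h => ?_, fun h => ?_, fun h => ?_⟩ <;>
    have hq := mod4_eq_of_val_mod h <;> norm_num at hq
  exacts [⟨sigma3.A_of_zero hq, sigma3.B_of_zero hq, sigma3.C_of_zero hq⟩,
    ⟨sigma3.A_of_one hq, sigma3.B_of_one hq, sigma3.C_of_one hq⟩,
    ⟨sigma3.A_of_two hq, sigma3.B_of_two hq, sigma3.C_of_two hq⟩,
    ⟨sigma3.A_of_three hq, sigma3.B_of_three hq, sigma3.C_of_three hq⟩]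

/-- if `n = 4m`, `b ≡ 3 (mod 4)` and `8b ≡ 16 (mod n)`, then the permutation
`σ₃` (defined case-wise on `i mod 4`) is a graph automorphism of `Pr_{4m}(b, b-4, 2b-3)`. -/
theorem propeller_family3_automorphism
    (m b : ℕ) (hm : 1 ≤ m) (hb : 0 < b ∧ b < 4 * m) (hb4 : b % 4 = 3)
    (h8b : 8 * (b : ZMod (4 * m)) = 16) :
    ∃ φ : propeller (4 * m) b ((b : ZMod (4 * m)) - 4) (2 * (b : ZMod (4 * m)) - 3) ≃g
          propeller (4 * m) b ((b : ZMod (4 * m)) - 4) (2 * (b : ZMod (4 * m)) - 3),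
      ∀ i : ZMod (4 * m),
        (i.val % 4 = 0 →
          φ (A i) = A i ∧ φ (B i) = A (i + 1) ∧ φ (C i) = A (i + 2)) ∧
        (i.val % 4 = 1 →
          φ (A i) = B (i - 1) ∧ φ (B i) = A (i - 1 + (b : ZMod (4 * m))) ∧
          φ (C i) = B (i - 1 + (b : ZMod (4 * m)))) ∧
        (i.val % 4 = 2 →
          φ (A i) = C (i - 2) ∧ φ (B i) = C (i - 5 + 2 * (b : ZMod (4 * m))) ∧
          φ (C i) = C (i - 8 + 4 * (b : ZMod (4 * m)))) ∧
        (i.val % 4 = 3 →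
          φ (A i) = B (i + 1 - (b : ZMod (4 * m))) ∧
          φ (B i) = C (i + 1 - (b : ZMod (4 * m))) ∧
          φ (C i) = B (i + 5 - 2 * (b : ZMod (4 * m)))) :=
  propeller_family3_automorphism_general m b hm hb4 h8b
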